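/- arXiv:2510.08050 — 2 statements merged into one kernel-verified Lean document; each statement's English description precedes it below -/
import Mathlib

section
/- An invariant element of H ⊗ H (i.e. one commuting with the image of Δ) is a left 2-cocycle if and only if it is a right 2-cocycle. -/
open TensorProduct

variable {H : Type*}

/-- `(id ⊗ Δ) : H ⊗ H → H ⊗ (H ⊗ H)`. -/
noncomputable def idComul [Semiring H] [HopfAlgebra ℂ H] :
    H ⊗[ℂ] H →ₗ[ℂ] H ⊗[ℂ] (H ⊗[ℂ] H) :=
  TensorProduct.map LinearMap.id (Coalgebra.comul (R := ℂ))

/-- `(Δ ⊗ id) : H ⊗ H → (H ⊗ H) ⊗ H`. -/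
noncomputable def comulId [Semiring H] [HopfAlgebra ℂ H] :
    H ⊗[ℂ] H →ₗ[ℂ] (H ⊗[ℂ] H) ⊗[ℂ] H :=
  TensorProduct.map (Coalgebra.comul (R := ℂ)) LinearMap.id

/-- A left 2-cocycle: an invertible `Ω ∈ H ⊗ H` with
`(1 ⊗ Ω)(id ⊗ Δ)(Ω) = (Ω ⊗ 1)(Δ ⊗ id)(Ω)` (comparing both sides in
`H ⊗ (H ⊗ H)` via the associator). -/
noncomputable def IsLeftTwoCocycle [Semiring H] [HopfAlgebra ℂ H] (Ω : H ⊗[ℂ] H) : Prop :=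
  IsUnit Ω ∧
    ((1 : H) ⊗ₜ[ℂ] Ω) * idComul Ω =
      (Algebra.TensorProduct.assoc ℂ ℂ ℂ H H H) ((Ω ⊗ₜ[ℂ] (1 : H)) * comulId Ω)

/-- A right 2-cocycle: an invertible `Ω ∈ H ⊗ H` with
`(id ⊗ Δ)(Ω)(1 ⊗ Ω) = (Δ ⊗ id)(Ω)(Ω ⊗ 1)`. -/
noncomputable def IsRightTwoCocycle [Semiring H] [HopfAlgebra ℂ H] (Ω : H ⊗[ℂ] H) : Prop :=
  IsUnit Ω ∧
    idComul Ω * ((1 : H) ⊗ₜ[ℂ] Ω) =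
      (Algebra.TensorProduct.assoc ℂ ℂ ℂ H H H) (comulId Ω * (Ω ⊗ₜ[ℂ] (1 : H)))

lemma one_tmul_comm [Semiring H] [HopfAlgebra ℂ H] (Ω : H ⊗[ℂ] H)
    (hinvar : ∀ h : H, Ω * Coalgebra.comul (R := ℂ) h = Coalgebra.comul (R := ℂ) h * Ω)
    (x : H ⊗[ℂ] H) :
    ((1 : H) ⊗ₜ[ℂ] Ω) * idComul x = idComul x * ((1 : H) ⊗ₜ[ℂ] Ω) := by
  induction x using TensorProduct.induction_on with
  | zero => simp
  | tmul a b =>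
      simp only [idComul, TensorProduct.map_tmul, LinearMap.id_coe, id_eq,
        Algebra.TensorProduct.tmul_mul_tmul, one_mul, mul_one, hinvar b]
  | add x y hx hy => simp [map_add, mul_add, add_mul, hx, hy]

lemma tmul_one_comm [Semiring H] [HopfAlgebra ℂ H] (Ω : H ⊗[ℂ] H)
    (hinvar : ∀ h : H, Ω * Coalgebra.comul (R := ℂ) h = Coalgebra.comul (R := ℂ) h * Ω)
    (x : H ⊗[ℂ] H) :
    (Ω ⊗ₜ[ℂ] (1 : H)) * comulId x = comulId x * (Ω ⊗ₜ[ℂ] (1 : H)) := by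
  induction x using TensorProduct.induction_on with
  | zero => simp
  | tmul a b =>
      simp only [comulId, TensorProduct.map_tmul, LinearMap.id_coe, id_eq,
        Algebra.TensorProduct.tmul_mul_tmul, one_mul, mul_one, hinvar a]
  | add x y hx hy => simp [map_add, mul_add, add_mul, hx, hy]

/-- An invariant element of `H ⊗ H` (one commuting with the image of `Δ`) is a
left 2-cocycle if and only if it is a right 2-cocycle. -/
theorem invariant_leftTwoCocycle_iff_rightTwoCocycle
    [Semiring H] [HopfAlgebra ℂ H] (Ω : H ⊗[ℂ] H)
    (hinvar : ∀ h : H, Ω * Coalgebra.comul (R := ℂ) h = Coalgebra.comul (R := ℂ) h * Ω) :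
    IsLeftTwoCocycle Ω ↔ IsRightTwoCocycle Ω := by
  unfold IsLeftTwoCocycle IsRightTwoCocycle
  rw [one_tmul_comm Ω hinvar Ω, tmul_one_comm Ω hinvar Ω]
end

section
/- The assignment π₄(u) = diag(ω, ω³, ω⁵, ω⁷), π₄(s) = the permutation matrix swapping basis vectors 1↔2 and 3↔4, π₄(t) = the permutation matrix swapping 1↔3 and 2↔4 (ω = e^{2πi/8}) extends to a 4-dimensional irreducible unitary representation of G = Z₈ ⋊ Aut(Z₈). -/
/-- Relations of the presentation
`⟨s, t, u | s² = t² = u⁸ = 1, st = ts, sus⁻¹ = u³, tut⁻¹ = u⁵⟩`,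
with generators `0 ↦ s`, `1 ↦ t`, `2 ↦ u`. -/
def holRels : Set (FreeGroup (Fin 3)) :=
  { FreeGroup.of 0 ^ 2, FreeGroup.of 1 ^ 2, FreeGroup.of 2 ^ 8,
    FreeGroup.of 0 * FreeGroup.of 1 * (FreeGroup.of 0)⁻¹ * (FreeGroup.of 1)⁻¹,
    FreeGroup.of 0 * FreeGroup.of 2 * (FreeGroup.of 0)⁻¹ * (FreeGroup.of 2 ^ 3)⁻¹,
    FreeGroup.of 1 * FreeGroup.of 2 * (FreeGroup.of 1)⁻¹ * (FreeGroup.of 2 ^ 5)⁻¹ }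

/-- The group `G = Z₈ ⋊ Aut(Z₈)`, presented by the above relations. -/
def Hol8 : Type := PresentedGroup holRels

noncomputable instance : Group Hol8 := by unfold Hol8; infer_instance

/-- The images of the generators `s`, `t`, `u` in `G`. -/
noncomputable def gs : Hol8 := PresentedGroup.of 0
noncomputable def gt : Hol8 := PresentedGroup.of 1
noncomputable def gu : Hol8 := PresentedGroup.of 2

noncomputable def ω8 : ℂ := Complex.exp (2 * Real.pi * Complex.I / 8)

/-! Index `i : Fin 4` by the odd residue `2i + 1` mod 8, i.e. by `(ℤ/8)ˣ`. Then `π₄(u)` is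
`diag(ω^(2i+1))`, and `π₄(s)`, `π₄(t)` are the permutations of `(ℤ/8)ˣ` given by multiplication by
3 and 5; conjugating `diag(ω^(2i+1))` by them therefore raises it to the 3rd and 5th power, which
gives the defining relations. Since the `ω^(2i+1)` are distinct, a matrix commuting with `π₄(u)`
is diagonal, and commuting with `π₄(s)`, `π₄(t)` forces its diagonal to be constant, because
multiplication by 3 and 5 act transitively on `(ℤ/8)ˣ`. -/

open Matrix Equiv

namespace Matrix

variable {n R : Type*} [DecidableEq n] [Fintype n]

theorem permMatrix_mul_diagonal [NonAssocSemiring R] (σ : Perm n) (d : n → R) :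
    σ.permMatrix R * diagonal d = diagonal (d ∘ σ) * σ.permMatrix R := by
  ext i j
  rw [PEquiv.toMatrix_toPEquiv_mul, PEquiv.mul_toMatrix_toPEquiv]
  simp [diagonal_apply, eq_symm_apply]

theorem permMatrix_mem_unitaryGroup [CommRing R] [StarRing R] (σ : Perm n) :
    σ.permMatrix R ∈ unitaryGroup n R := by
  rw [mem_unitaryGroup_iff, star_eq_conjTranspose, conjTranspose_permMatrix, ← permMatrix_mul,
    inv_mul_cancel, permMatrix_one]

theorem diagonal_mem_unitaryGroup [CommRing R] [StarRing R] {d : n → R}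
    (hd : ∀ i, d i * star (d i) = 1) : diagonal d ∈ unitaryGroup n R := by
  rw [mem_unitaryGroup_iff, star_eq_conjTranspose, diagonal_conjTranspose, diagonal_mul_diagonal,
    ← diagonal_one]
  exact congrArg diagonal (funext hd)

theorem apply_eq_zero_of_commute_diagonal [CommRing R] [NoZeroDivisors R] {A : Matrix n n R}
    {d : n → R} (hA : Commute A (diagonal d)) {i j : n} (hij : d i ≠ d j) : A i j = 0 := by
  have h := congr_fun₂ hA.eq i j
  rw [mul_diagonal, diagonal_mul] at h
  have : (d j - d i) * A i j = 0 := by linear_combination h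
  exact (mul_eq_zero.1 this).resolve_left (sub_ne_zero.2 hij.symm)

theorem eq_diagonal_of_commute_diagonal [CommRing R] [NoZeroDivisors R] {A : Matrix n n R}
    {d : n → R} (hd : Function.Injective d) (hA : Commute A (diagonal d)) :
    A = diagonal fun i => A i i := by
  ext i j
  rcases eq_or_ne i j with rfl | hij
  · simp
  · rw [diagonal_apply_ne _ hij, apply_eq_zero_of_commute_diagonal hA (hd.ne hij)]

theorem comp_eq_of_commute_permMatrix [Semiring R] {a : n → R} (σ : Perm n)
    (h : Commute (diagonal a) (σ.permMatrix R)) : a ∘ σ = a := by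
  have h' : diagonal (a ∘ σ) * σ.permMatrix R = diagonal a * σ.permMatrix R := by
    rw [← permMatrix_mul_diagonal, h.eq]
  have hinv : σ.permMatrix R * σ⁻¹.permMatrix R = 1 := by
    rw [← permMatrix_mul, inv_mul_cancel, permMatrix_one]
  have := congrArg (· * σ⁻¹.permMatrix R) h'
  simp only [Matrix.mul_assoc, hinv, Matrix.mul_one] at this
  exact diagonal_injective this

end Matrix

namespace Hol8

variable {H : Type*} [Group H] {s t u : H}

theorem lift_rels (hs : s ^ 2 = 1) (ht : t ^ 2 = 1) (hu : u ^ 8 = 1) (hst : s * t = t * s)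
    (hsu : s * u * s⁻¹ = u ^ 3) (htu : t * u * t⁻¹ = u ^ 5) :
    ∀ r ∈ holRels, FreeGroup.lift (![s, t, u] : Fin 3 → H) r = 1 := by
  simp only [holRels, Set.mem_insert_iff, Set.mem_singleton_iff]
  rintro r (rfl | rfl | rfl | rfl | rfl | rfl) <;> simp [*]

noncomputable def lift (hs : s ^ 2 = 1) (ht : t ^ 2 = 1) (hu : u ^ 8 = 1) (hst : s * t = t * s)
    (hsu : s * u * s⁻¹ = u ^ 3) (htu : t * u * t⁻¹ = u ^ 5) : Hol8 →* H :=
  PresentedGroup.toGroup (lift_rels hs ht hu hst hsu htu)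

variable (hs : s ^ 2 = 1) (ht : t ^ 2 = 1) (hu : u ^ 8 = 1) (hst : s * t = t * s)
  (hsu : s * u * s⁻¹ = u ^ 3) (htu : t * u * t⁻¹ = u ^ 5)

@[simp] theorem lift_gs : lift hs ht hu hst hsu htu gs = s :=
  PresentedGroup.toGroup.of _
@[simp] theorem lift_gt : lift hs ht hu hst hsu htu gt = t :=
  PresentedGroup.toGroup.of _
@[simp] theorem lift_gu : lift hs ht hu hst hsu htu gu = u :=
  PresentedGroup.toGroup.of _

end Hol8

theorem ω8_isPrimitiveRoot : IsPrimitiveRoot ω8 8 := by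
  simpa [ω8] using Complex.isPrimitiveRoot_exp 8 (by norm_num)

theorem ω8_pow_eq_pow {m n : ℕ} (h : m ≡ n [MOD 8]) : ω8 ^ m = ω8 ^ n := by
  rw [← pow_mod_orderOf ω8 m, ← pow_mod_orderOf ω8 n, ← ω8_isPrimitiveRoot.eq_orderOf]
  exact congrArg (ω8 ^ ·) h

def sPerm : Perm (Fin 4) := swap 0 1 * swap 2 3
def tPerm : Perm (Fin 4) := swap 0 2 * swap 1 3

noncomputable def oddPowers (i : Fin 4) : ℂ := ω8 ^ (2 * (i : ℕ) + 1)

theorem oddPowers_injective : Function.Injective oddPowers := by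
  intro i j h
  have := ω8_isPrimitiveRoot.pow_inj (by omega) (by omega) h
  omega

theorem oddPowers_comp_eq_pow {σ : Perm (Fin 4)} {k : ℕ}
    (h : ∀ i, 2 * (σ i : ℕ) + 1 ≡ (2 * i + 1) * k [MOD 8]) :
    oddPowers ∘ σ = oddPowers ^ k := by
  funext i
  simp only [Function.comp_apply, Pi.pow_apply, oddPowers, ← pow_mul]
  exact ω8_pow_eq_pow (h i)

theorem permMatrix_mul_diagonal_oddPowers {σ : Perm (Fin 4)} {k : ℕ}
    (h : ∀ i, 2 * (σ i : ℕ) + 1 ≡ (2 * i + 1) * k [MOD 8]) :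
    σ.permMatrix ℂ * diagonal oddPowers = diagonal oddPowers ^ k * σ.permMatrix ℂ := by
  rw [permMatrix_mul_diagonal, diagonal_pow, oddPowers_comp_eq_pow h]

theorem diagonal_oddPowers_mem_unitaryGroup : diagonal oddPowers ∈ unitaryGroup (Fin 4) ℂ := by
  refine diagonal_mem_unitaryGroup fun i => ?_
  rw [Complex.star_def, Complex.mul_conj', oddPowers, norm_pow,
    ω8_isPrimitiveRoot.norm'_eq_one (by norm_num)]
  simp

theorem oddPowers_eq : oddPowers = ![ω8, ω8 ^ 3, ω8 ^ 5, ω8 ^ 7] := by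
  funext i; fin_cases i <;> simp [oddPowers]

theorem sPerm_permMatrix :
    sPerm.permMatrix ℂ = !![0, 1, 0, 0; 1, 0, 0, 0; 0, 0, 0, 1; 0, 0, 1, 0] := by
  ext i j; fin_cases i <;> fin_cases j <;> rfl

theorem tPerm_permMatrix :
    tPerm.permMatrix ℂ = !![0, 0, 1, 0; 0, 0, 0, 1; 1, 0, 0, 0; 0, 1, 0, 0] := by
  ext i j; fin_cases i <;> fin_cases j <;> rfl

noncomputable def piS : unitaryGroup (Fin 4) ℂ := ⟨_, permMatrix_mem_unitaryGroup sPerm⟩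
noncomputable def piT : unitaryGroup (Fin 4) ℂ := ⟨_, permMatrix_mem_unitaryGroup tPerm⟩
noncomputable def piU : unitaryGroup (Fin 4) ℂ := ⟨_, diagonal_oddPowers_mem_unitaryGroup⟩

theorem piS_sq : piS ^ 2 = 1 := by
  apply Subtype.ext; simp [piS, sq, ← permMatrix_mul, show sPerm * sPerm = 1 by decide]

theorem piT_sq : piT ^ 2 = 1 := by
  apply Subtype.ext; simp [piT, sq, ← permMatrix_mul, show tPerm * tPerm = 1 by decide]

theorem piU_pow_eight : piU ^ 8 = 1 := by
  apply Subtype.ext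
  simp only [piU, SubmonoidClass.coe_pow, diagonal_pow, OneMemClass.coe_one, ← diagonal_one]
  congr 1; funext i
  rw [Pi.pow_apply, oddPowers, ← pow_mul, mul_comm, pow_mul, ω8_isPrimitiveRoot.pow_eq_one,
    one_pow]

theorem piS_mul_piT : piS * piT = piT * piS := by
  apply Subtype.ext
  simp [piS, piT, ← permMatrix_mul, show tPerm * sPerm = sPerm * tPerm by decide]

theorem piS_conj_piU : piS * piU * piS⁻¹ = piU ^ 3 := by
  rw [mul_inv_eq_iff_eq_mul]; apply Subtype.ext
  simp only [Submonoid.coe_mul, SubmonoidClass.coe_pow]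
  exact permMatrix_mul_diagonal_oddPowers (σ := sPerm) (k := 3) (by decide)

theorem piT_conj_piU : piT * piU * piT⁻¹ = piU ^ 5 := by
  rw [mul_inv_eq_iff_eq_mul]; apply Subtype.ext
  simp only [Submonoid.coe_mul, SubmonoidClass.coe_pow]
  exact permMatrix_mul_diagonal_oddPowers (σ := tPerm) (k := 5) (by decide)

noncomputable def pi4 : Hol8 →* unitaryGroup (Fin 4) ℂ :=
  Hol8.lift piS_sq piT_sq piU_pow_eight piS_mul_piT piS_conj_piU piT_conj_piU

theorem apply_eq_apply_zero_of_comp_eq {α : Type*} {a : Fin 4 → α} (hs : a ∘ sPerm = a)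
    (ht : a ∘ tPerm = a) : ∀ i, a i = a 0 := by
  have h1 : a 1 = a 0 := congr_fun hs 0
  have h2 : a 2 = a 0 := congr_fun ht 0
  have h3 : a 3 = a 1 := congr_fun ht 1
  intro i; fin_cases i <;> simp [h1, h2, h3]

/-- The assignment `π₄(u) = diag(ω, ω³, ω⁵, ω⁷)`, `π₄(s) =` the permutation
matrix swapping `1↔2`, `3↔4`, `π₄(t) =` the permutation matrix swapping `1↔3`,
`2↔4` (`ω = e^{2πi/8}`) extends to a 4-dimensional irreducible unitary
representation of `G = Z₈ ⋊ Aut(Z₈)`. -/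
theorem pi4_exists_irreducible :
    ∃ π : Hol8 →* Matrix.unitaryGroup (Fin 4) ℂ,
      (π gu : Matrix (Fin 4) (Fin 4) ℂ) = Matrix.diagonal ![ω8, ω8 ^ 3, ω8 ^ 5, ω8 ^ 7] ∧
      (π gs : Matrix (Fin 4) (Fin 4) ℂ) =
        !![0, 1, 0, 0; 1, 0, 0, 0; 0, 0, 0, 1; 0, 0, 1, 0] ∧
      (π gt : Matrix (Fin 4) (Fin 4) ℂ) =
        !![0, 0, 1, 0; 0, 0, 0, 1; 1, 0, 0, 0; 0, 1, 0, 0] ∧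
      (∀ A : Matrix (Fin 4) (Fin 4) ℂ,
        (∀ g : Hol8, A * (π g : Matrix (Fin 4) (Fin 4) ℂ) =
          (π g : Matrix (Fin 4) (Fin 4) ℂ) * A) → ∃ c : ℂ, A = c • 1) := by
  refine ⟨pi4, by simp [pi4, piU, oddPowers_eq], by simp [pi4, piS, sPerm_permMatrix],
    by simp [pi4, piT, tPerm_permMatrix], fun A hA => ?_⟩
  have hcomm : ∀ g, Commute A (pi4 g) := hA
  have hdiag : A = diagonal fun i => A i i :=
    eq_diagonal_of_commute_diagonal oddPowers_injective (by simpa [pi4, piU] using hcomm gu)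
  set a := fun i => A i i
  have hs : a ∘ sPerm = a := comp_eq_of_commute_permMatrix sPerm <| by
    rw [← hdiag]; simpa [pi4, piS] using hcomm gs
  have ht : a ∘ tPerm = a := comp_eq_of_commute_permMatrix tPerm <| by
    rw [← hdiag]; simpa [pi4, piT] using hcomm gt
  refine ⟨a 0, ?_⟩
  rw [hdiag, smul_one_eq_diagonal]
  exact congrArg diagonal (funext (apply_eq_apply_zero_of_comp_eq hs ht))
end
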